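/- Let k be a positive integer and ζ a real number with λ_k(ζ) > 1. Then λ_k(ζ) = (w_k(ζ) − k + 1)/k holds if and only if w_1(ζ) = w_2(ζ) = ⋯ = w_k(ζ). -/

import Mathlib

/-!
For `λ_k(ζ) > 1` the number `ζ` is irrational and `λ_k(ζ) = (w_1(ζ) - k + 1) / k`: good
simultaneous approximations come from good approximations of `ζ` alone.

* If `|aζ - b| = δ`, then `x = a^k` satisfies `‖ζ^j x‖ ≤ a^(k-j) |(aζ)^j - b^j| ≪ a^(k-1) δ`.
* Conversely, if `max_j ‖ζ^j x‖ ≤ x^(-η)` with `η > 1` and `x` is large, the nearest integers `y_j`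
  to `ζ^j x` satisfy `y_1 y_j = x y_(j+1)`, since the difference is an integer of absolute value
  `< 1`. Hence `x^(k-1) ∣ y_1^k`; writing `y_1 / x = b / a` in lowest terms, `a^(k-1)` divides
  `gcd(x, y_1)`, so `a^k ≤ x` and `|aζ - b| = (a / x) |xζ - y_1| ≤ a^(-(kη + k - 1))`.
* `w_1 = λ_1`, since `p_0 + p_1 ζ` is small exactly when `-p_0 / p_1` approximates `ζ`.

As `u ↦ (u - k + 1) / k` is injective on `EReal` and `w_1 ≤ w_j ≤ w_k`, the formula with `w_k`
holds iff `w_k = w_1`.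
-/

/-- Distance from a real number to the nearest integer. -/
noncomputable def distNearestInt (a : ℝ) : ℝ := |a - round a|

/-- `max_{1 ≤ j ≤ k} ‖ζ^j x‖` for a positive integer `x`. -/
noncomputable def maxDist (k : ℕ) (ζ : ℝ) (x : ℕ) : ℝ :=
  ⨆ j ∈ Finset.Icc 1 k, distNearestInt (ζ ^ j * x)

/-- The approximation constant `λ_k(ζ)`, as an extended real number in `[0,∞]`. -/
noncomputable def lambdaConst (k : ℕ) (ζ : ℝ) : EReal :=
  sSup (insert (0 : EReal) {e : EReal | ∃ η : ℝ, e = (η : EReal) ∧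
    {x : ℕ | 0 < x ∧ 0 < maxDist k ζ x ∧ maxDist k ζ x ≤ (x : ℝ) ^ (-η)}.Infinite})

/-- The uniform approximation constant `λ̂_k(ζ)`, as an extended real number in `[0,∞]`. -/
noncomputable def lambdaHatConst (k : ℕ) (ζ : ℝ) : EReal :=
  sSup (insert (0 : EReal) {e : EReal | ∃ η : ℝ, e = (η : EReal) ∧
    ∃ X₀ : ℝ, ∀ X : ℝ, X₀ ≤ X → ∃ x : ℕ, 1 ≤ x ∧ (x : ℝ) ≤ X ∧
      0 < maxDist k ζ x ∧ maxDist k ζ x ≤ X ^ (-η)})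

/-- The dual approximation constant `w_k(ζ)`, as an extended real number in `[0,∞]`. -/
noncomputable def wConst (k : ℕ) (ζ : ℝ) : EReal :=
  sSup (insert (0 : EReal) {e : EReal | ∃ ν : ℝ, e = (ν : EReal) ∧
    ∀ X₀ : ℝ, ∃ X : ℝ, X₀ ≤ X ∧ ∃ p : Fin (k + 1) → ℤ,
      (∀ j, |(p j : ℝ)| ≤ X) ∧
      0 < |∑ j : Fin (k + 1), ζ ^ (j : ℕ) * (p j : ℝ)| ∧
      |∑ j : Fin (k + 1), ζ ^ (j : ℕ) * (p j : ℝ)| ≤ X ^ (-ν)})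

/-- The uniform dual approximation constant `ŵ_k(ζ)`, as an extended real number in `[0,∞]`. -/
noncomputable def wHatConst (k : ℕ) (ζ : ℝ) : EReal :=
  sSup (insert (0 : EReal) {e : EReal | ∃ ν : ℝ, e = (ν : EReal) ∧
    ∃ X₀ : ℝ, ∀ X : ℝ, X₀ ≤ X → ∃ p : Fin (k + 1) → ℤ,
      (∀ j, |(p j : ℝ)| ≤ X) ∧
      0 < |∑ j : Fin (k + 1), ζ ^ (j : ℕ) * (p j : ℝ)| ∧
      |∑ j : Fin (k + 1), ζ ^ (j : ℕ) * (p j : ℝ)| ≤ X ^ (-ν)})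

open Filter

lemma distNearestInt_nonneg (a : ℝ) : 0 ≤ distNearestInt a := abs_nonneg _

lemma distNearestInt_le_half (a : ℝ) : distNearestInt a ≤ 1 / 2 := abs_sub_round a

lemma distNearestInt_le_abs_sub (a : ℝ) (m : ℤ) : distNearestInt a ≤ |a - m| := round_le a m

lemma Irrational.distNearestInt_pos {a : ℝ} (h : Irrational a) : 0 < distNearestInt a :=
  abs_pos.2 (sub_ne_zero.2 (h.ne_int _))

lemma distNearestInt_mul_natAbs_le (ζ : ℝ) (m n : ℤ) :
    distNearestInt (ζ * n.natAbs) ≤ |m + ζ * n| := by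
  have hcast : ((n.natAbs : ℕ) : ℝ) = |(n : ℝ)| := by rw [Nat.cast_natAbs, Int.cast_abs]
  rw [hcast]
  rcases abs_cases (n : ℝ) with ⟨hn, -⟩ | ⟨hn, -⟩ <;> rw [hn]
  · calc distNearestInt (ζ * n) ≤ |ζ * n - ((-m : ℤ) : ℝ)| := distNearestInt_le_abs_sub _ _
      _ = |m + ζ * n| := by push_cast; ring_nf
  · calc distNearestInt (ζ * -n) ≤ |ζ * -n - m| := distNearestInt_le_abs_sub _ _
      _ = |m + ζ * n| := by rw [← abs_neg]; ring_nf

lemma inv_le_distNearestInt {a : ℝ} {n : ℕ} (hn : 0 < n) {m : ℤ} (hm : n * a = m)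
    (ha : 0 < distNearestInt a) : (n : ℝ)⁻¹ ≤ distNearestInt a := by
  have hn' : (0 : ℝ) < n := by exact_mod_cast hn
  have hint : (n : ℝ) * (a - round a) = ((m - n * round a : ℤ) : ℝ) := by
    push_cast; rw [← hm]; ring
  have hne : m - n * round a ≠ 0 := by
    rintro h0
    rw [h0, Int.cast_zero, mul_eq_zero] at hint
    rcases hint with h | h
    · exact hn'.ne' h
    · rw [distNearestInt, h, abs_zero] at ha; exact ha.false
  rw [inv_le_iff_one_le_mul₀ hn']
  calc (1 : ℝ) ≤ |((m - n * round a : ℤ) : ℝ)| := by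
        rw [← Int.cast_abs]; exact_mod_cast Int.one_le_abs hne
    _ = distNearestInt a * n := by
      rw [← hint, abs_mul, abs_of_pos hn', distNearestInt, mul_comm]

lemma Rat.inv_den_pow_le_distNearestInt (q : ℚ) {j k : ℕ} (hjk : j ≤ k) (x : ℕ)
    (h : 0 < distNearestInt ((q : ℝ) ^ j * x)) :
    (((q.den ^ k : ℕ) : ℝ))⁻¹ ≤ distNearestInt ((q : ℝ) ^ j * x) := by
  refine inv_le_distNearestInt (by positivity) (m := q.num ^ j * q.den ^ (k - j) * x) ?_ h
  have hd : (q.den : ℝ) ≠ 0 := by positivity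
  obtain ⟨i, rfl⟩ := Nat.exists_eq_add_of_le hjk
  rw [Rat.cast_def, Nat.add_sub_cancel_left, div_pow]
  push_cast
  field_simp
  ring

lemma abs_round_mul_natCast_le (ζ : ℝ) (a : ℕ) : |(round (ζ * a) : ℝ)| ≤ (|ζ| + 1) * a := by
  rcases Nat.eq_zero_or_pos a with rfl | ha
  · simp
  calc |(round (ζ * a) : ℝ)| = |ζ * a - (ζ * a - round (ζ * a))| := by ring_nf
    _ ≤ |ζ * a| + distNearestInt (ζ * a) := abs_sub _ _
    _ ≤ |ζ| * a + a := by
      rw [abs_mul, Nat.abs_cast]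
      linarith [distNearestInt_le_half (ζ * a), (Nat.one_le_cast.2 ha : (1 : ℝ) ≤ a)]
    _ = (|ζ| + 1) * a := by ring

lemma maxDist_le {k : ℕ} {ζ : ℝ} {x : ℕ} {c : ℝ} (hc : 0 ≤ c)
    (h : ∀ j ∈ Finset.Icc 1 k, distNearestInt (ζ ^ j * x) ≤ c) : maxDist k ζ x ≤ c :=
  Real.iSup_le (fun j => Real.iSup_le (h j) hc) hc

lemma maxDist_nonneg (k : ℕ) (ζ : ℝ) (x : ℕ) : 0 ≤ maxDist k ζ x :=
  Real.iSup_nonneg fun _ => Real.iSup_nonneg fun _ => distNearestInt_nonneg _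

lemma distNearestInt_le_maxDist {k j : ℕ} {ζ : ℝ} {x : ℕ} (hj : j ∈ Finset.Icc 1 k) :
    distNearestInt (ζ ^ j * x) ≤ maxDist k ζ x := by
  have hbdd : BddAbove (Set.range fun i => ⨆ _ : i ∈ Finset.Icc 1 k,
      distNearestInt (ζ ^ i * x)) := by
    refine ⟨1 / 2, ?_⟩
    rintro _ ⟨i, rfl⟩
    exact Real.iSup_le (fun _ => distNearestInt_le_half _) (by norm_num)
  exact (ciSup_pos hj).ge.trans (le_ciSup hbdd j)

lemma maxDist_le_half (k : ℕ) (ζ : ℝ) (x : ℕ) : maxDist k ζ x ≤ 1 / 2 :=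
  maxDist_le (by norm_num) fun _ _ => distNearestInt_le_half _

lemma maxDist_one (ζ : ℝ) (x : ℕ) : maxDist 1 ζ x = distNearestInt (ζ * x) := by
  refine le_antisymm (maxDist_le (distNearestInt_nonneg _) fun j hj => ?_) ?_
  · rw [Finset.Icc_self, Finset.mem_singleton] at hj
    rw [hj, pow_one]
  · simpa using distNearestInt_le_maxDist (k := 1) (j := 1) (ζ := ζ) (x := x) (by simp)

lemma Irrational.maxDist_pos {ζ : ℝ} (hζ : Irrational ζ) {k : ℕ} (hk : 0 < k) {x : ℕ}
    (hx : 0 < x) : 0 < maxDist k ζ x := by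
  refine lt_of_lt_of_le ?_ (distNearestInt_le_maxDist (j := 1) (Finset.mem_Icc.2 ⟨le_rfl, hk⟩))
  rw [pow_one]
  exact (hζ.mul_natCast hx.ne').distNearestInt_pos

lemma Irrational.exists_pos_le_distNearestInt {ζ : ℝ} (hζ : Irrational ζ) (N : ℕ) :
    ∃ c > 0, ∀ a : ℕ, 0 < a → a < N → c ≤ distNearestInt (ζ * a) := by
  classical
  let s : Finset ℝ := insert 1 ((Finset.Ioo 0 N).image fun a : ℕ => distNearestInt (ζ * a))
  refine ⟨s.min' (Finset.insert_nonempty _ _), ?_, fun a ha haN => ?_⟩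
  · refine (Finset.lt_min'_iff _ _).2 fun c hc => ?_
    rcases Finset.mem_insert.1 hc with rfl | hc
    · exact one_pos
    · obtain ⟨a, ha, rfl⟩ := Finset.mem_image.1 hc
      exact (hζ.mul_natCast (Finset.mem_Ioo.1 ha).1.ne').distNearestInt_pos
  · exact s.min'_le _ (Finset.mem_insert_of_mem (Finset.mem_image_of_mem _
      (Finset.mem_Ioo.2 ⟨ha, haN⟩)))

noncomputable def exponentSup (P : ℝ → Prop) : EReal :=
  sSup (insert (0 : EReal) {e : EReal | ∃ η : ℝ, e = (η : EReal) ∧ P η})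

lemma exponentSup_nonneg (P : ℝ → Prop) : 0 ≤ exponentSup P :=
  le_sSup (Set.mem_insert _ _)

lemma le_exponentSup {P : ℝ → Prop} {η : ℝ} (h : P η) : (η : EReal) ≤ exponentSup P :=
  le_sSup (Set.mem_insert_of_mem _ ⟨η, rfl, h⟩)

lemma exponentSup_le {P : ℝ → Prop} {c : EReal} (h0 : 0 ≤ c)
    (h : ∀ η, P η → (η : EReal) ≤ c) : exponentSup P ≤ c := by
  refine sSup_le ?_
  rintro e (rfl | ⟨η, rfl, hη⟩)
  exacts [h0, h η hη]

lemma exists_lt_of_coe_lt_exponentSup {P : ℝ → Prop} {r : ℝ} (hr : 0 ≤ r)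
    (h : (r : EReal) < exponentSup P) : ∃ η, r < η ∧ P η := by
  obtain ⟨e, he, hlt⟩ := lt_sSup_iff.1 h
  rcases he with rfl | ⟨η, rfl, hη⟩
  · exact absurd hlt (not_lt.2 (EReal.coe_nonneg.2 hr))
  · exact ⟨η, EReal.coe_lt_coe_iff.1 hlt, hη⟩

lemma coe_le_exponentSup_of_forall_lt {P : ℝ → Prop} {r : ℝ} (h : ∀ ν < r, P ν) :
    (r : EReal) ≤ exponentSup P := by
  by_contra! hlt
  obtain ⟨ν, hν, hνr⟩ := EReal.exists_between_coe_real hlt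
  exact (le_exponentSup (h ν (EReal.coe_lt_coe_iff.1 hνr))).not_gt hν

def IsLambdaExponent (k : ℕ) (ζ η : ℝ) : Prop :=
  {x : ℕ | 0 < x ∧ 0 < maxDist k ζ x ∧ maxDist k ζ x ≤ (x : ℝ) ^ (-η)}.Infinite

def IsWExponent (k : ℕ) (ζ ν : ℝ) : Prop :=
  ∀ X₀ : ℝ, ∃ X : ℝ, X₀ ≤ X ∧ ∃ p : Fin (k + 1) → ℤ,
    (∀ j, |(p j : ℝ)| ≤ X) ∧
    0 < |∑ j : Fin (k + 1), ζ ^ (j : ℕ) * (p j : ℝ)| ∧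
    |∑ j : Fin (k + 1), ζ ^ (j : ℕ) * (p j : ℝ)| ≤ X ^ (-ν)

lemma lambdaConst_eq_exponentSup (k : ℕ) (ζ : ℝ) :
    lambdaConst k ζ = exponentSup (IsLambdaExponent k ζ) := rfl

lemma wConst_eq_exponentSup (k : ℕ) (ζ : ℝ) :
    wConst k ζ = exponentSup (IsWExponent k ζ) := rfl

lemma isLambdaExponent_iff_frequently {k : ℕ} {ζ η : ℝ} :
    IsLambdaExponent k ζ η ↔
      ∃ᶠ x : ℕ in atTop, 0 < maxDist k ζ x ∧ maxDist k ζ x ≤ (x : ℝ) ^ (-η) := by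
  rw [IsLambdaExponent, ← Nat.frequently_atTop_iff_infinite]
  exact frequently_congr ((eventually_gt_atTop 0).mono fun x hx => and_iff_right hx)

lemma isLambdaExponent_one_iff {ζ η : ℝ} :
    IsLambdaExponent 1 ζ η ↔
      ∃ᶠ a : ℕ in atTop, 0 < distNearestInt (ζ * a) ∧ distNearestInt (ζ * a) ≤ (a : ℝ) ^ (-η) := by
  simp only [isLambdaExponent_iff_frequently, maxDist_one]

lemma IsWExponent.succ {k : ℕ} {ζ ν : ℝ} (h : IsWExponent k ζ ν) : IsWExponent (k + 1) ζ ν := by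
  intro X₀
  obtain ⟨X, hX, p, hp, hpos, hle⟩ := h X₀
  have hsum : ∑ j : Fin (k + 2), ζ ^ (j : ℕ) * (((Fin.snoc p 0 : Fin (k + 2) → ℤ) j : ℤ) : ℝ) =
      ∑ j : Fin (k + 1), ζ ^ (j : ℕ) * (p j : ℝ) := by
    simp [Fin.sum_univ_castSucc]
  refine ⟨X, hX, Fin.snoc p 0, Fin.lastCases ?_ fun j => ?_, hsum ▸ hpos, hsum ▸ hle⟩
  · simpa using (abs_nonneg _).trans (hp 0)
  · simpa using hp j

lemma wConst_mono (ζ : ℝ) : Monotone fun k => wConst k ζ :=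
  monotone_nat_of_le_succ fun _ => sSup_le_sSup <| Set.insert_subset_insert
    fun _ ⟨ν, he, hν⟩ => ⟨ν, he, IsWExponent.succ hν⟩

lemma irrational_of_isLambdaExponent {k : ℕ} {ζ η : ℝ} (hη : 0 < η)
    (h : IsLambdaExponent k ζ η) : Irrational ζ := by
  rintro ⟨q, rfl⟩
  have hD : (0 : ℝ) < ((q.den ^ k : ℕ) : ℝ)⁻¹ := by positivity
  have hsmall : ∀ᶠ x : ℕ in atTop, (x : ℝ) ^ (-η) < ((q.den ^ k : ℕ) : ℝ)⁻¹ :=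
    ((tendsto_rpow_neg_atTop hη).comp tendsto_natCast_atTop_atTop).eventually (gt_mem_nhds hD)
  obtain ⟨x, ⟨hpos, hle⟩, hlt⟩ :=
    ((isLambdaExponent_iff_frequently.1 h).and_eventually hsmall).exists
  obtain ⟨j, hj, hdj⟩ : ∃ j ∈ Finset.Icc 1 k, 0 < distNearestInt ((q : ℝ) ^ j * x) := by
    by_contra! h'
    exact hpos.not_ge (maxDist_le le_rfl h')
  have hlow := q.inv_den_pow_le_distNearestInt (Finset.mem_Icc.1 hj).2 x hdj
  exact ((hlow.trans (distNearestInt_le_maxDist hj)).trans hle).not_gt hlt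

lemma EReal.strictMono_sub_add_one_div {k : ℝ} (hk : 0 < k) :
    StrictMono fun u : EReal => (u - k + 1) / k := fun _ _ huv =>
  EReal.div_lt_div_right_of_pos (EReal.coe_pos.2 hk) (EReal.coe_ne_top k)
    (EReal.add_lt_add_right_coe
      (EReal.sub_lt_sub_of_lt_of_le huv le_rfl (EReal.coe_ne_bot k) (EReal.coe_ne_top k)) 1)

lemma EReal.coe_eq_sub_add_one_div {k : ℝ} (hk : 0 < k) (c : ℝ) :
    (c : EReal) = (((k * c + k - 1 : ℝ) : EReal) - k + 1) / k := by
  change (c : EReal) = ((k * c + k - 1 - k + 1) / k : ℝ)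
  rw [EReal.coe_eq_coe_iff]
  field_simp
  ring

lemma EReal.coe_le_sub_add_one_div_iff {k : ℝ} (hk : 0 < k) (c : ℝ) (u : EReal) :
    (c : EReal) ≤ (u - k + 1) / k ↔ ((k * c + k - 1 : ℝ) : EReal) ≤ u := by
  rw [EReal.coe_eq_sub_add_one_div hk c, (EReal.strictMono_sub_add_one_div hk).le_iff_le]

lemma EReal.coe_lt_sub_add_one_div_iff {k : ℝ} (hk : 0 < k) (c : ℝ) (u : EReal) :
    (c : EReal) < (u - k + 1) / k ↔ ((k * c + k - 1 : ℝ) : EReal) < u := by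
  rw [EReal.coe_eq_sub_add_one_div hk c, (EReal.strictMono_sub_add_one_div hk).lt_iff_lt]

lemma isLambdaExponent_one_of_isWExponent_one {ζ ν : ℝ} (hζ : Irrational ζ) (hν : 0 < ν)
    (h : IsWExponent 1 ζ ν) : IsLambdaExponent 1 ζ ν := by
  rw [isLambdaExponent_one_iff, frequently_atTop]
  intro N
  obtain ⟨c, hc, hcN⟩ := hζ.exists_pos_le_distNearestInt N
  obtain ⟨X₀, hX₀⟩ := eventually_atTop.1
    ((tendsto_rpow_neg_atTop hν).eventually (gt_mem_nhds (lt_min hc one_pos)))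
  obtain ⟨X, hX, p, hp, hpos, hle⟩ := h X₀
  rw [Fin.sum_univ_two] at hpos hle
  simp only [Fin.isValue, Fin.val_zero, Fin.val_one, pow_zero, pow_one, one_mul] at hpos hle
  have hXc : X ^ (-ν) < min c 1 := hX₀ X hX
  set a := (p 1).natAbs with ha_def
  have hda : distNearestInt (ζ * a) ≤ |(p 0 : ℝ) + ζ * p 1| := distNearestInt_mul_natAbs_le ζ _ _
  have ha : 0 < a := by
    refine Nat.pos_of_ne_zero fun ha0 => ?_
    rw [ha_def, Int.natAbs_eq_zero] at ha0
    rw [ha0, Int.cast_zero, mul_zero, add_zero] at hpos hle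
    have hp0 : p 0 = 0 := Int.abs_lt_one_iff.1 <| by
      exact_mod_cast hle.trans_lt (hXc.trans_le (min_le_right _ _))
    rw [hp0, Int.cast_zero, abs_zero] at hpos
    exact hpos.false
  have haX : (a : ℝ) ≤ X := by simpa [ha_def, Nat.cast_natAbs] using hp 1
  refine ⟨a, not_lt.1 fun haN => (hcN a ha haN).not_gt ?_,
    (hζ.mul_natCast ha.ne').distNearestInt_pos, ?_⟩
  · exact (hda.trans hle).trans_lt (hXc.trans_le (min_le_left _ _))
  · calc distNearestInt (ζ * a) ≤ X ^ (-ν) := hda.trans hle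
      _ ≤ (a : ℝ) ^ (-ν) := Real.rpow_le_rpow_of_nonpos (by positivity) haX (by linarith)

lemma isWExponent_one_of_isLambdaExponent_one {ζ r ν : ℝ} (h : IsLambdaExponent 1 ζ r)
    (hνr : ν < r) : IsWExponent 1 ζ ν := by
  intro X₀
  set M := |ζ| + 1
  have hev : ∀ᶠ a : ℕ in atTop, X₀ ≤ a ∧ 1 ≤ a ∧ M ^ ν ≤ (a : ℝ) ^ (r - ν) :=
    (tendsto_natCast_atTop_atTop.eventually_ge_atTop X₀).and ((eventually_ge_atTop 1).and
      (((tendsto_rpow_atTop (sub_pos.2 hνr)).comp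
        tendsto_natCast_atTop_atTop).eventually_ge_atTop _))
  obtain ⟨a, ⟨hpos, hle⟩, hX₀a, ha1, hMa⟩ :=
    ((isLambdaExponent_one_iff.1 h).and_eventually hev).exists
  have ha' : (0 : ℝ) < a := by exact_mod_cast ha1
  have hM : 1 ≤ M := le_add_of_nonneg_left (abs_nonneg ζ)
  set b := round (ζ * a)
  have hb : |(b : ℝ)| ≤ M * a := abs_round_mul_natCast_le ζ a
  have haM : (a : ℝ) ≤ M * a := le_mul_of_one_le_left ha'.le hM
  have hsum : ∑ j : Fin 2, ζ ^ (j : ℕ) * ((![-b, (a : ℤ)] j : ℤ) : ℝ) = ζ * a - b := by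
    simp [Fin.sum_univ_two, neg_add_eq_sub]
  refine ⟨M * a, hX₀a.trans haM, ![-b, a], Fin.forall_fin_two.2 ⟨by simpa using hb,
    by simpa using haM⟩, hsum ▸ hpos, hsum ▸ ?_⟩
  calc distNearestInt (ζ * a) ≤ (a : ℝ) ^ (-r) := hle
    _ = ((a : ℝ) ^ (r - ν))⁻¹ * (a : ℝ) ^ (-ν) := by
      rw [← Real.rpow_neg ha'.le, ← Real.rpow_add ha']; ring_nf
    _ ≤ (M ^ ν)⁻¹ * (a : ℝ) ^ (-ν) := by gcongr
    _ = (M * a) ^ (-ν) := by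
      rw [Real.mul_rpow (by positivity) ha'.le, Real.rpow_neg (by positivity : (0 : ℝ) ≤ M),
        Real.rpow_neg ha'.le]

lemma maxDist_pow_le {k : ℕ} (hk : 0 < k) (ζ : ℝ) (a : ℕ) :
    maxDist k ζ (a ^ k) ≤
      k * (|ζ| + 1) ^ (k - 1) * (a : ℝ) ^ (k - 1) * distNearestInt (ζ * a) := by
  set M := |ζ| + 1
  set δ := distNearestInt (ζ * a)
  set b := round (ζ * a)
  have hM : 1 ≤ M := le_add_of_nonneg_left (abs_nonneg ζ)
  have hδ : 0 ≤ δ := distNearestInt_nonneg _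
  have hζa : |ζ * a| ≤ M * a := by
    rw [abs_mul, Nat.abs_cast]
    exact mul_le_mul_of_nonneg_right (by linarith) (Nat.cast_nonneg a)
  have hb : |(b : ℝ)| ≤ M * a := abs_round_mul_natCast_le ζ a
  clear_value M
  refine maxDist_le (by positivity) fun j hj => ?_
  obtain ⟨hj1, hjk⟩ := Finset.mem_Icc.1 hj
  obtain ⟨i, rfl⟩ := Nat.exists_eq_add_of_le hjk
  obtain ⟨j, rfl⟩ : ∃ j', j = j' + 1 := ⟨j - 1, by omega⟩
  have hpow : |(ζ * a) ^ (j + 1) - (b : ℝ) ^ (j + 1)| ≤ δ * (j + 1 : ℕ) * (M * a) ^ j := by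
    refine (abs_pow_sub_pow_le _ _ _).trans ?_
    rw [Nat.add_sub_cancel]
    exact mul_le_mul_of_nonneg_left (pow_le_pow_left₀ (le_max_of_le_left (abs_nonneg _))
      (max_le hζa hb) j) (by positivity)
  calc distNearestInt (ζ ^ (j + 1) * ((a ^ (j + 1 + i) : ℕ) : ℝ))
      ≤ |ζ ^ (j + 1) * ((a ^ (j + 1 + i) : ℕ) : ℝ) - ((b ^ (j + 1) * a ^ i : ℤ) : ℝ)| :=
        distNearestInt_le_abs_sub _ _
    _ = (a : ℝ) ^ i * |(ζ * a) ^ (j + 1) - (b : ℝ) ^ (j + 1)| := by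
      rw [← abs_of_nonneg (by positivity : (0 : ℝ) ≤ (a : ℝ) ^ i), ← abs_mul]
      congr 1
      push_cast
      ring
    _ ≤ (a : ℝ) ^ i * (δ * (j + 1 : ℕ) * (M * a) ^ j) := by gcongr
    _ = (j + 1 : ℕ) * M ^ j * (a : ℝ) ^ (j + i) * δ := by
      ring
    _ ≤ (j + 1 + i : ℕ) * M ^ (j + i) * (a : ℝ) ^ (j + i) * δ := by
      have hji : ((j + 1 : ℕ) : ℝ) ≤ (j + 1 + i : ℕ) := by exact_mod_cast (by omega)
      have hMji : M ^ j ≤ M ^ (j + i) := pow_le_pow_right₀ hM (by omega)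
      gcongr
    _ = _ := by simp only [Nat.add_right_comm j 1 i, Nat.add_sub_cancel]

lemma isLambdaExponent_of_isLambdaExponent_one {k : ℕ} (hk : 0 < k) {ζ ν η : ℝ}
    (hζ : Irrational ζ) (h : IsLambdaExponent 1 ζ ν) (hη : k * η < ν - k + 1) :
    IsLambdaExponent k ζ η := by
  set C : ℝ := k * (|ζ| + 1) ^ (k - 1)
  set e := ν - k + 1 - k * η
  have hev : ∀ᶠ a : ℕ in atTop, 0 < a ∧ C ≤ (a : ℝ) ^ e :=
    (eventually_gt_atTop 0).and (((tendsto_rpow_atTop (by linarith : 0 < e)).comp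
      tendsto_natCast_atTop_atTop).eventually_ge_atTop C)
  rw [isLambdaExponent_iff_frequently]
  refine (tendsto_pow_atTop hk.ne').frequently <| ((isLambdaExponent_one_iff.1 h).and_eventually
    hev).mono fun a ⟨⟨_, hle⟩, ha, hCa⟩ => ⟨hζ.maxDist_pos hk (pow_pos ha k), ?_⟩
  have ha' : (0 : ℝ) < a := by exact_mod_cast ha
  have hpow : (a : ℝ) ^ (k - 1) = (a : ℝ) ^ ((k : ℝ) - 1) := by
    rw [← Real.rpow_natCast, Nat.cast_sub hk, Nat.cast_one]
  calc maxDist k ζ (a ^ k) ≤ C * (a : ℝ) ^ (k - 1) * distNearestInt (ζ * a) := maxDist_pow_le hk ζ a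
    _ ≤ (a : ℝ) ^ e * (a : ℝ) ^ ((k : ℝ) - 1) * (a : ℝ) ^ (-ν) := by
      rw [hpow]; gcongr
    _ = (((a ^ k : ℕ) : ℝ)) ^ (-η) := by
      rw [← Real.rpow_add ha', ← Real.rpow_add ha', Nat.cast_pow, ← Real.rpow_natCast,
        ← Real.rpow_mul ha'.le]
      congr 1
      simp only [e]
      ring

lemma abs_pow_le_one_add_abs_pow {ζ : ℝ} {i k : ℕ} (hik : i ≤ k) : |ζ ^ i| ≤ (|ζ| + 1) ^ k := by
  rw [abs_pow]
  exact (pow_le_pow_left₀ (abs_nonneg ζ) (le_add_of_nonneg_right zero_le_one) i).trans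
    (pow_le_pow_right₀ (le_add_of_nonneg_left (abs_nonneg ζ)) hik)

lemma abs_round_mul_round_sub_le {k : ℕ} {ζ : ℝ} {x : ℕ} (hx : 0 < x) {j : ℕ} (hj : 1 ≤ j)
    (hjk : j < k) :
    |((round (ζ * x) * round (ζ ^ j * x) - x * round (ζ ^ (j + 1) * x) : ℤ) : ℝ)| ≤
      4 * (|ζ| + 1) ^ k * x * maxDist k ζ x := by
  set K := (|ζ| + 1) ^ k
  set m := maxDist k ζ x
  set d : ℕ → ℝ := fun i => ζ ^ i * x - round (ζ ^ i * x)
  have hd : ∀ i ∈ Finset.Icc 1 k, |d i| ≤ m := fun i hi => distNearestInt_le_maxDist hi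
  have hd1 := hd 1 (Finset.mem_Icc.2 ⟨le_rfl, by omega⟩)
  have hdj := hd j (Finset.mem_Icc.2 ⟨hj, hjk.le⟩)
  have hdj1 := hd (j + 1) (Finset.mem_Icc.2 ⟨by omega, hjk⟩)
  have hid : ((round (ζ * x) * round (ζ ^ j * x) - x * round (ζ ^ (j + 1) * x) : ℤ) : ℝ) =
      x * d (j + 1) - ζ ^ 1 * x * d j - ζ ^ j * x * d 1 + d 1 * d j := by
    simp only [d, pow_one]; push_cast; ring
  have hm0 : 0 ≤ m := maxDist_nonneg k ζ x
  have hm : m ≤ 1 / 2 := maxDist_le_half k ζ x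
  clear_value m d
  have hK : 1 ≤ K := by simpa using abs_pow_le_one_add_abs_pow (ζ := ζ) (Nat.zero_le k)
  have hx1 : (1 : ℝ) ≤ x := by exact_mod_cast hx
  have hxm : (0 : ℝ) ≤ x * m := mul_nonneg (Nat.cast_nonneg x) hm0
  have h₁ : |x * d (j + 1)| ≤ K * x * m := by
    rw [abs_mul, Nat.abs_cast, mul_assoc]
    exact (mul_le_mul_of_nonneg_left hdj1 (Nat.cast_nonneg x)).trans (le_mul_of_one_le_left hxm hK)
  have h₂ : |ζ ^ 1 * x * d j| ≤ K * x * m := by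
    rw [abs_mul, abs_mul, Nat.abs_cast]
    gcongr
    exact abs_pow_le_one_add_abs_pow (by omega)
  have h₃ : |ζ ^ j * x * d 1| ≤ K * x * m := by
    rw [abs_mul, abs_mul, Nat.abs_cast]
    gcongr
    exact abs_pow_le_one_add_abs_pow hjk.le
  have h₄ : |d 1 * d j| ≤ K * x * m := by
    rw [abs_mul]
    calc |d 1| * |d j| ≤ 1 * m :=
          mul_le_mul (by linarith) hdj (abs_nonneg _) zero_le_one
      _ ≤ K * x * m := mul_le_mul_of_nonneg_right (one_le_mul_of_one_le_of_one_le hK hx1) hm0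
  rw [hid]
  have t₁ := abs_add_le (x * d (j + 1) - ζ ^ 1 * x * d j - ζ ^ j * x * d 1) (d 1 * d j)
  have t₂ := abs_sub (x * d (j + 1) - ζ ^ 1 * x * d j) (ζ ^ j * x * d 1)
  have t₃ := abs_sub (x * d (j + 1)) (ζ ^ 1 * x * d j)
  linarith

lemma round_mul_round_eq {k : ℕ} {ζ : ℝ} {x : ℕ} (hx : 0 < x) {j : ℕ} (hj : 1 ≤ j) (hjk : j < k)
    (hsmall : 4 * (|ζ| + 1) ^ k * x * maxDist k ζ x < 1) :
    round (ζ * x) * round (ζ ^ j * x) = x * round (ζ ^ (j + 1) * x) := by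
  have hlt := (abs_round_mul_round_sub_le hx hj hjk).trans_lt hsmall
  rw [← Int.cast_abs, ← Int.cast_one, Int.cast_lt, Int.abs_lt_one_iff] at hlt
  exact sub_eq_zero.1 hlt

lemma round_pow_eq {k : ℕ} {ζ : ℝ} {x : ℕ} (hx : 0 < x)
    (hsmall : 4 * (|ζ| + 1) ^ k * x * maxDist k ζ x < 1) {j : ℕ} (hj : 1 ≤ j) (hjk : j ≤ k) :
    round (ζ * x) ^ j = (x : ℤ) ^ (j - 1) * round (ζ ^ j * x) := by
  induction j, hj using Nat.le_induction with
  | base => simp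
  | succ j hj ih =>
    rw [pow_succ, ih (by omega), mul_assoc, mul_comm _ (round (ζ * x)),
      round_mul_round_eq hx hj (by omega) hsmall, ← mul_assoc, ← pow_succ,
      Nat.sub_add_cancel hj, Nat.add_sub_cancel]

lemma Int.exists_pow_le_mul_eq_of_pow_dvd_pow {k : ℕ} (hk : 0 < k) {x y : ℤ} (hx : 0 < x)
    (h : x ^ (k - 1) ∣ y ^ k) : ∃ a b : ℤ, 0 < a ∧ a ^ k ≤ x ∧ a * y = b * x := by
  obtain ⟨g, a, b, hg, hab, rfl, rfl⟩ := Int.exists_gcd_one' (Int.gcd_pos_of_ne_zero_left y hx.ne')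
  have hg' : (0 : ℤ) < g := by exact_mod_cast hg
  have ha : 0 < a := pos_of_mul_pos_left hx hg'.le
  obtain ⟨i, rfl⟩ : ∃ i, k = i + 1 := ⟨k - 1, by omega⟩
  have hdvd : a ^ i ∣ g * b ^ (i + 1) := by
    rw [Nat.add_sub_cancel] at h
    refine (mul_dvd_mul_iff_left (pow_ne_zero i hg'.ne')).1 ?_
    rwa [show (g : ℤ) ^ i * a ^ i = (a * g) ^ i by ring,
      show (g : ℤ) ^ i * (g * b ^ (i + 1)) = (b * g) ^ (i + 1) by ring]
  have hag : a ^ i ≤ g :=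
    Int.le_of_dvd hg' (((Int.isCoprime_iff_gcd_eq_one.2 hab).pow).dvd_of_dvd_mul_right hdvd)
  refine ⟨a, b, ha, ?_, by ring⟩
  calc a ^ (i + 1) = a ^ i * a := pow_succ a i
    _ ≤ g * a := mul_le_mul_of_nonneg_right hag ha.le
    _ = a * g := mul_comm _ _

lemma exists_approx_of_maxDist_lt {k : ℕ} (hk : 0 < k) {ζ : ℝ} {x : ℕ} (hx : 0 < x)
    (hsmall : 4 * (|ζ| + 1) ^ k * x * maxDist k ζ x < 1) :
    ∃ a : ℕ, 0 < a ∧ a ^ k ≤ x ∧ x * distNearestInt (ζ * a) ≤ a * maxDist k ζ x := by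
  obtain ⟨a, b, ha, hak, hab⟩ := Int.exists_pow_le_mul_eq_of_pow_dvd_pow hk
    (by exact_mod_cast hx : (0 : ℤ) < x) ⟨_, round_pow_eq hx hsmall hk le_rfl⟩
  lift a to ℕ using ha.le
  have hab' : (a : ℝ) * round (ζ * x) = b * x := by exact_mod_cast hab
  refine ⟨a, by exact_mod_cast ha, by exact_mod_cast hak, ?_⟩
  calc x * distNearestInt (ζ * a) ≤ x * |ζ * a - b| := by
        gcongr; exact distNearestInt_le_abs_sub _ _
    _ = |x * (ζ * a - b)| := by rw [abs_mul, Nat.abs_cast]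
    _ = |a * (ζ ^ 1 * x - round (ζ ^ 1 * x))| := by
        rw [pow_one]; congr 1; linear_combination hab'
    _ = a * |ζ ^ 1 * x - round (ζ ^ 1 * x)| := by rw [abs_mul, Nat.abs_cast]
    _ ≤ a * maxDist k ζ x := by
        gcongr
        exact distNearestInt_le_maxDist (Finset.mem_Icc.2 ⟨le_rfl, hk⟩)

lemma le_rpow_of_mul_le_mul_rpow {a x δ η : ℝ} {k : ℕ} (ha : 0 < a) (hak : a ^ k ≤ x)
    (hη : -1 ≤ η) (h : x * δ ≤ a * x ^ (-η)) : δ ≤ a ^ (-(k * η + k - 1)) := by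
  have hx : 0 < x := (pow_pos ha k).trans_le hak
  calc δ ≤ a * x ^ (-(η + 1)) := by
        refine le_of_mul_le_mul_left (h.trans_eq ?_) hx
        rw [mul_left_comm, show -η = 1 + -(η + 1) by ring, Real.rpow_add hx, Real.rpow_one]
    _ ≤ a * (a ^ k) ^ (-(η + 1)) :=
        mul_le_mul_of_nonneg_left (Real.rpow_le_rpow_of_nonpos (by positivity) hak
          (by linarith)) ha.le
    _ = a ^ (-(k * η + k - 1)) := by
        rw [← Real.rpow_natCast, ← Real.rpow_mul ha.le,
          show -(k * η + k - 1) = 1 + k * -(η + 1) by ring, Real.rpow_add ha, Real.rpow_one]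

lemma isLambdaExponent_one_of_isLambdaExponent {k : ℕ} (hk : 0 < k) {ζ η : ℝ}
    (hζ : Irrational ζ) (hη : 1 < η) (h : IsLambdaExponent k ζ η) :
    IsLambdaExponent 1 ζ (k * η + k - 1) := by
  rw [isLambdaExponent_one_iff, frequently_atTop]
  intro N
  obtain ⟨c, hc, hcN⟩ := hζ.exists_pos_le_distNearestInt N
  have hev : ∀ᶠ x : ℕ in atTop,
      0 < x ∧ 4 * (|ζ| + 1) ^ k * (x : ℝ) ^ (-(η - 1)) < 1 ∧ (N : ℝ) < c * x :=
    (eventually_gt_atTop 0).and <|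
      ((((tendsto_rpow_neg_atTop (sub_pos.2 hη)).comp tendsto_natCast_atTop_atTop).const_mul
        (4 * (|ζ| + 1) ^ k)).eventually (gt_mem_nhds (by rw [mul_zero]; exact one_pos))).and
      ((tendsto_natCast_atTop_atTop.const_mul_atTop hc).eventually_gt_atTop _)
  obtain ⟨x, ⟨-, hle⟩, hx, hsmall, hNx⟩ :=
    ((isLambdaExponent_iff_frequently.1 h).and_eventually hev).exists
  have hx' : (0 : ℝ) < x := by exact_mod_cast hx
  have hxη : (x : ℝ) * (x : ℝ) ^ (-η) = (x : ℝ) ^ (-(η - 1)) := by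
    rw [show -(η - 1) = 1 + -η by ring, Real.rpow_add hx', Real.rpow_one]
  obtain ⟨a, ha, hak, hxa⟩ := exists_approx_of_maxDist_lt hk hx <| by
    calc 4 * (|ζ| + 1) ^ k * x * maxDist k ζ x ≤ 4 * (|ζ| + 1) ^ k * (x * (x : ℝ) ^ (-η)) := by
          rw [mul_assoc]; gcongr
      _ < 1 := by rwa [hxη]
  refine ⟨a, not_lt.1 fun haN => ?_, (hζ.mul_natCast ha.ne').distNearestInt_pos,
    le_rpow_of_mul_le_mul_rpow (by exact_mod_cast ha) (by exact_mod_cast hak) (by linarith)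
      (hxa.trans (by gcongr))⟩
  -- a < N would give c x ≤ x ‖aζ‖ ≤ a · maxDist ≤ a / 2 < N < c x
  have haN' : (a : ℝ) < N := by exact_mod_cast haN
  have := hcN a ha haN
  nlinarith [maxDist_le_half k ζ x, maxDist_nonneg k ζ x]

theorem lambdaConst_eq_wConst_one_of_one_lt {k : ℕ} (hk : 0 < k) {ζ : ℝ} (h : 1 < lambdaConst k ζ) :
    lambdaConst k ζ = (wConst 1 ζ - ((k : ℝ) : EReal) + 1) / ((k : ℝ) : EReal) := by
  have hk' : (0 : ℝ) < k := by exact_mod_cast hk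
  rw [lambdaConst_eq_exponentSup, wConst_eq_exponentSup] at *
  obtain ⟨η₀, hη₀, hP₀⟩ := exists_lt_of_coe_lt_exponentSup zero_le_one (by exact_mod_cast h)
  have hζ : Irrational ζ := irrational_of_isLambdaExponent (by linarith) hP₀
  have hupper : ∀ η, 1 < η → IsLambdaExponent k ζ η →
      (η : EReal) ≤ (exponentSup (IsWExponent 1 ζ) - (k : ℝ) + 1) / (k : ℝ) :=
    fun η hη hP => (EReal.coe_le_sub_add_one_div_iff hk' η _).2 <|
      coe_le_exponentSup_of_forall_lt fun _ hν => isWExponent_one_of_isLambdaExponent_one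
        (isLambdaExponent_one_of_isLambdaExponent hk hζ hη hP) hν
  have hη₀_le := hupper η₀ hη₀ hP₀
  refine le_antisymm (exponentSup_le ?_ fun η hP => ?_)
    (EReal.ge_of_forall_gt_iff_ge.1 fun c hc => ?_)
  · exact (EReal.coe_nonneg.2 (by linarith)).trans hη₀_le
  · rcases le_or_gt η 1 with hη | hη
    · exact (EReal.coe_le_coe_iff.2 (hη.trans hη₀.le)).trans hη₀_le
    · exact hupper η hη hP
  · rcases le_or_gt c 1 with hc1 | hc1
    · exact (by exact_mod_cast hc1 : (c : EReal) ≤ 1).trans h.le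
    have hkc : (k : ℝ) < k * c := lt_mul_of_one_lt_right hk' hc1
    have hk1 : (1 : ℝ) ≤ k := by exact_mod_cast hk
    rw [EReal.coe_lt_sub_add_one_div_iff hk'] at hc
    obtain ⟨ν, hν, hQ⟩ := exists_lt_of_coe_lt_exponentSup (by linarith) hc
    exact le_exponentSup (isLambdaExponent_of_isLambdaExponent_one hk hζ
      (isLambdaExponent_one_of_isWExponent_one hζ (by linarith) hQ) (by linarith))

theorem stmt19 (k : ℕ) (hk : 0 < k) (ζ : ℝ) (h : 1 < lambdaConst k ζ) :
    lambdaConst k ζ = (wConst k ζ - ((k : ℝ) : EReal) + 1) / ((k : ℝ) : EReal) ↔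
      ∀ j : ℕ, 1 ≤ j → j ≤ k → wConst j ζ = wConst 1 ζ := by
  rw [lambdaConst_eq_wConst_one_of_one_lt hk h,
    (EReal.strictMono_sub_add_one_div (by exact_mod_cast hk : (0 : ℝ) < k)).injective.eq_iff]
  refine ⟨fun h1k j hj hjk => le_antisymm ?_ (wConst_mono ζ hj), fun hw => (hw k hk le_rfl).symm⟩
  exact h1k ▸ wConst_mono ζ hjk
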